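/- arXiv:1901.03133 — 6 statements merged into one kernel-verified Lean document; each statement's English description precedes it below -/
import Mathlib

section
/- Let f : ℝ^d → ℝ be a Lipschitz function, z ∈ ℝ^d and e ∈ S^{d−1}. Then lim_{ε→0} ζ(f,z,ε,e) = 0 if and only if f has a directional derivative at z in direction e, i.e. lim_{t→0} (f(z+te)−f(z))/t exists. -/
open MeasureTheory Filter Metric Set Topology RealInnerProductSpace

noncomputable section

/-- The quantity `ζ(f,z,ε,e)`: the supremum of
`|(f(x+te)−f(x))/t − (f(y+se)−f(y))/s|` over all segments `[x,x+te]`, `[y,y+se]`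
containing `z`, with `s,t ∈ [−ε,ε] ∖ {0}`. -/
def zeta (d : ℕ) (f : EuclideanSpace ℝ (Fin d) → ℝ) (z : EuclideanSpace ℝ (Fin d))
    (ε : ℝ) (e : EuclideanSpace ℝ (Fin d)) : ℝ :=
  sSup {r : ℝ | ∃ x y : EuclideanSpace ℝ (Fin d), ∃ s t : ℝ,
    s ∈ Set.Icc (-ε) ε ∧ t ∈ Set.Icc (-ε) ε ∧ s ≠ 0 ∧ t ≠ 0 ∧
    z ∈ segment ℝ x (x + t • e) ∧ z ∈ segment ℝ y (y + s • e) ∧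
    r = |(f (x + t • e) - f x) / t - (f (y + s • e) - f y) / s|}

/-- For a Lipschitz `f : ℝ^d → ℝ`, a point `z` and a unit direction `e`,
`ζ(f,z,ε,e) → 0` as `ε → 0` if and only if `f` has a directional derivative at `z` in the
direction `e`. -/
theorem stmt2 (d : ℕ) (f : EuclideanSpace ℝ (Fin d) → ℝ)
    (hf : ∃ K, LipschitzWith K f)
    (z e : EuclideanSpace ℝ (Fin d)) (he : e ∈ sphere (0 : EuclideanSpace ℝ (Fin d)) 1) :
    Tendsto (fun ε => zeta d f z ε e) (𝓝[>] (0:ℝ)) (𝓝 0) ↔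
      ∃ L : ℝ, Tendsto (fun t : ℝ => (f (z + t • e) - f z) / t) (𝓝[≠] (0:ℝ)) (𝓝 L) := by
  obtain ⟨K, hK⟩ := hf
  have hee : ‖e‖ = 1 := by simpa using mem_sphere_zero_iff_norm.mp he
  set g : ℝ → ℝ := fun t => (f (z + t • e) - f z) / t with hgdef
  have hdist : ∀ (x : EuclideanSpace ℝ (Fin d)) (t : ℝ), dist (x + t • e) x = |t| := by
    intro x t
    rw [dist_eq_norm, add_sub_cancel_left, norm_smul, Real.norm_eq_abs, hee, mul_one]
  have hquot : ∀ (x : EuclideanSpace ℝ (Fin d)) (t : ℝ), t ≠ 0 →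
      |(f (x + t • e) - f x) / t| ≤ (K : ℝ) := by
    intro x t ht
    rw [abs_div, div_le_iff₀ (abs_pos.mpr ht)]
    calc |f (x + t • e) - f x| = dist (f (x + t • e)) (f x) := (Real.dist_eq _ _).symm
      _ ≤ (K : ℝ) * dist (x + t • e) x := hK.dist_le_mul _ _
      _ = (K : ℝ) * |t| := by rw [hdist]
  have hbddAbove : ∀ ε : ℝ, ∀ r ∈ {r : ℝ | ∃ x y : EuclideanSpace ℝ (Fin d), ∃ s t : ℝ,
      s ∈ Set.Icc (-ε) ε ∧ t ∈ Set.Icc (-ε) ε ∧ s ≠ 0 ∧ t ≠ 0 ∧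
      z ∈ segment ℝ x (x + t • e) ∧ z ∈ segment ℝ y (y + s • e) ∧
      r = |(f (x + t • e) - f x) / t - (f (y + s • e) - f y) / s|}, r ≤ 2 * K := by
    rintro ε r ⟨x, y, s, t, _, _, hs0, ht0, _, _, rfl⟩
    calc |(f (x + t • e) - f x) / t - (f (y + s • e) - f y) / s|
        ≤ |(f (x + t • e) - f x) / t| + |(f (y + s • e) - f y) / s| := abs_sub _ _
      _ ≤ (K : ℝ) + (K : ℝ) := add_le_add (hquot x t ht0) (hquot y s hs0)
      _ = 2 * K := by ring
  have key_le : ∀ (ε c : ℝ), 0 ≤ c →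
      (∀ (x y : EuclideanSpace ℝ (Fin d)) (s t : ℝ), s ∈ Set.Icc (-ε) ε → t ∈ Set.Icc (-ε) ε →
        s ≠ 0 → t ≠ 0 → z ∈ segment ℝ x (x + t • e) → z ∈ segment ℝ y (y + s • e) →
        |(f (x + t • e) - f x) / t - (f (y + s • e) - f y) / s| ≤ c) →
      zeta d f z ε e ≤ c := by
    intro ε c hc H
    apply Real.sSup_le _ hc
    rintro r ⟨x, y, s, t, hs, ht, hs0, ht0, hzx, hzy, rfl⟩
    exact H x y s t hs ht hs0 ht0 hzx hzy
  have le_key : ∀ (ε s t : ℝ), |s| ≤ ε → |t| ≤ ε → s ≠ 0 → t ≠ 0 →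
      |g t - g s| ≤ zeta d f z ε e := by
    intro ε s t hs ht hs0 ht0
    refine le_csSup ⟨2 * (K:ℝ), fun r hr => hbddAbove ε r hr⟩ ?_
    exact ⟨z, z, s, t, Set.mem_Icc.mpr (abs_le.mp hs), Set.mem_Icc.mpr (abs_le.mp ht),
      hs0, ht0, left_mem_segment ℝ _ _, left_mem_segment ℝ _ _, rfl⟩
  have nonneg : ∀ ε : ℝ, 0 ≤ zeta d f z ε e := by
    intro ε
    apply Real.sSup_nonneg
    rintro r ⟨x, y, s, t, _, _, _, _, _, _, rfl⟩
    exact abs_nonneg _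
  constructor
  · -- zeta → 0 implies derivative exists
    intro h
    have hcauchy : Cauchy (Filter.map g (𝓝[≠] (0:ℝ))) := by
      rw [cauchy_map_iff]
      refine ⟨inferInstance, ?_⟩
      rw [Metric.uniformity_basis_dist.tendsto_right_iff]
      intro δ hδ
      have hev : ∀ᶠ ε in 𝓝[>] (0:ℝ), zeta d f z ε e < δ := h.eventually (eventually_lt_nhds hδ)
      obtain ⟨ε, hεδ, hεpos⟩ := (hev.and self_mem_nhdsWithin).exists
      have habs : ∀ᶠ u in 𝓝[≠] (0:ℝ), |u| ≤ ε ∧ u ≠ 0 := by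
        have h1 : ∀ᶠ u in 𝓝 (0:ℝ), |u| ≤ ε := by
          filter_upwards [Metric.closedBall_mem_nhds (0:ℝ) hεpos] with u hu
          simpa [Real.dist_eq] using hu
        filter_upwards [eventually_nhdsWithin_of_eventually_nhds h1, self_mem_nhdsWithin]
          with u h1 h2
        exact ⟨h1, h2⟩
      filter_upwards [habs.prod_mk habs] with p hp
      obtain ⟨⟨h1, h2⟩, ⟨h3, h4⟩⟩ := hp
      calc dist (g p.1) (g p.2) = |g p.1 - g p.2| := Real.dist_eq _ _
        _ ≤ zeta d f z ε e := le_key ε p.2 p.1 h3 h1 h4 h2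
        _ < δ := hεδ
    obtain ⟨L, hL⟩ := CompleteSpace.complete hcauchy
    exact ⟨L, hL⟩
  · -- derivative exists implies zeta → 0
    rintro ⟨L, hL⟩
    rw [Metric.tendsto_nhds]
    intro δ hδ
    have hL' : ∀ᶠ u in 𝓝[≠] (0:ℝ), |g u - L| < δ / 4 := by
      have := Metric.tendsto_nhds.mp hL (δ / 4) (by positivity)
      simpa [Real.dist_eq] using this
    rw [eventually_nhdsWithin_iff, Metric.eventually_nhds_iff] at hL'
    obtain ⟨ε0, hε0, hball⟩ := hL'
    -- pointwise bound: |f(z+u•e) - f z - u*L| ≤ |u| * (δ/4) for |u| < ε0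
    have hP : ∀ u : ℝ, |u| < ε0 → |f (z + u • e) - f z - u * L| ≤ |u| * (δ / 4) := by
      intro u hu
      rcases eq_or_ne u 0 with rfl | hu0
      · simp
      · have h1 : |g u - L| < δ / 4 := by
          apply hball
          · simpa [Real.dist_eq] using hu
          · simpa using hu0
        have h2 : f (z + u • e) - f z - u * L = u * (g u - L) := by
          simp only [hgdef]
          field_simp
        rw [h2, abs_mul]
        exact mul_le_mul_of_nonneg_left h1.le (abs_nonneg u)
    -- key estimate for any admissible segment
    have est : ∀ (x : EuclideanSpace ℝ (Fin d)) (t : ℝ), t ≠ 0 → |t| < ε0 →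
        z ∈ segment ℝ x (x + t • e) → |(f (x + t • e) - f x) / t - L| ≤ δ / 4 := by
      intro x t ht0 htε hseg
      obtain ⟨a, b, ha, hb, hab, hz⟩ := hseg
      have hz' : z = x + (b * t) • e := by
        rw [← hz, smul_add, smul_smul, ← add_assoc, ← add_smul, hab, one_smul]
      have hx : x = z + (-(b * t)) • e := by
        rw [hz', neg_smul]; abel
      have hab' : a * t + b * t = t := by rw [← add_mul, hab, one_mul]
      have hx2 : x + t • e = z + (a * t) • e := by
        have hsum : (b * t) • e + (a * t) • e = t • e := by
          rw [← add_smul]; congr 1; linarith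
        calc x + t • e = x + ((b * t) • e + (a * t) • e) := by rw [hsum]
          _ = (x + (b * t) • e) + (a * t) • e := by rw [add_assoc]
          _ = z + (a * t) • e := by rw [← hz']
      have ha1 : a ≤ 1 := by linarith
      have hb1 : b ≤ 1 := by linarith
      have hua : |a * t| < ε0 := by
        rw [abs_mul, abs_of_nonneg ha]
        calc a * |t| ≤ 1 * |t| := mul_le_mul_of_nonneg_right ha1 (abs_nonneg t)
          _ = |t| := one_mul _
          _ < ε0 := htε
      have hub : |(-(b * t))| < ε0 := by
        rw [abs_neg, abs_mul, abs_of_nonneg hb]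
        calc b * |t| ≤ 1 * |t| := mul_le_mul_of_nonneg_right hb1 (abs_nonneg t)
          _ = |t| := one_mul _
          _ < ε0 := htε
      have hPa := hP (a * t) hua
      have hPb := hP (-(b * t)) hub
      have hEq : (f (x + t • e) - f x) / t - L =
          ((f (z + (a * t) • e) - f z - (a * t) * L)
            - (f (z + (-(b * t)) • e) - f z - (-(b * t)) * L)) / t := by
        rw [hx2, hx]
        field_simp
        linear_combination (t * L) * hab
      rw [hEq, abs_div, div_le_iff₀ (abs_pos.mpr ht0)]
      calc |(f (z + (a * t) • e) - f z - (a * t) * L)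
            - (f (z + (-(b * t)) • e) - f z - (-(b * t)) * L)|
          ≤ |f (z + (a * t) • e) - f z - (a * t) * L|
            + |f (z + (-(b * t)) • e) - f z - (-(b * t)) * L| := abs_sub _ _
        _ ≤ |a * t| * (δ / 4) + |(-(b * t))| * (δ / 4) := add_le_add hPa hPb
        _ = δ / 4 * |t| := by
            rw [abs_neg, abs_mul, abs_mul, abs_of_nonneg ha, abs_of_nonneg hb]
            linear_combination (|t| * (δ / 4)) * hab
    filter_upwards [Ioo_mem_nhdsGT_of_mem (Set.left_mem_Ico.mpr hε0)] with ε hε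
    rw [Real.dist_eq, sub_zero, abs_of_nonneg (nonneg ε)]
    have hbound : zeta d f z ε e ≤ δ / 2 := by
      apply key_le ε (δ / 2) (by positivity)
      intro x y s t hs ht hs0 ht0 hzx hzy
      have hsε : |s| < ε0 := lt_of_le_of_lt (abs_le.mpr (Set.mem_Icc.mp hs)) hε.2
      have htε : |t| < ε0 := lt_of_le_of_lt (abs_le.mpr (Set.mem_Icc.mp ht)) hε.2
      have h1 := est x t ht0 htε hzx
      have h2 := est y s hs0 hsε hzy
      calc |(f (x + t • e) - f x) / t - (f (y + s • e) - f y) / s|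
          = |((f (x + t • e) - f x) / t - L) - ((f (y + s • e) - f y) / s - L)| := by ring_nf
        _ ≤ |(f (x + t • e) - f x) / t - L| + |(f (y + s • e) - f y) / s - L| := abs_sub _ _
        _ ≤ δ / 4 + δ / 4 := add_le_add h1 h2
        _ = δ / 2 := by ring
    linarith


end
end

section
/- Let f : ℝ^d → ℝ be a Lipschitz function and z ∈ ℝ^d. If limsup_{ε→0} Υ(f,z,ε) > 0, then there exists u ∈ S^{d−1} such that limsup_{ε→0} ζ(f,z,ε,u) > 0. -/
open MeasureTheory Filter Metric Set Topology RealInnerProductSpace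

noncomputable section

/-- The quantity `Υ(f,z,ε) = sup_{e ∈ S^{d−1}} ζ(f,z,ε,e)`. -/
def Upsilon (d : ℕ) (f : EuclideanSpace ℝ (Fin d) → ℝ) (z : EuclideanSpace ℝ (Fin d))
    (ε : ℝ) : ℝ :=
  sSup {r : ℝ | ∃ e ∈ sphere (0 : EuclideanSpace ℝ (Fin d)) 1, r = zeta d f z ε e}

namespace Stmt3Aux

variable {d : ℕ} {f : EuclideanSpace ℝ (Fin d) → ℝ} {z : EuclideanSpace ℝ (Fin d)}
  {K : NNReal} {ε ε' : ℝ} {e e' : EuclideanSpace ℝ (Fin d)}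

/-- The defining set of `zeta`. -/
def ZS (d : ℕ) (f : EuclideanSpace ℝ (Fin d) → ℝ) (z : EuclideanSpace ℝ (Fin d))
    (ε : ℝ) (e : EuclideanSpace ℝ (Fin d)) : Set ℝ :=
  {r : ℝ | ∃ x y : EuclideanSpace ℝ (Fin d), ∃ s t : ℝ,
    s ∈ Set.Icc (-ε) ε ∧ t ∈ Set.Icc (-ε) ε ∧ s ≠ 0 ∧ t ≠ 0 ∧
    z ∈ segment ℝ x (x + t • e) ∧ z ∈ segment ℝ y (y + s • e) ∧
    r = |(f (x + t • e) - f x) / t - (f (y + s • e) - f y) / s|}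

lemma zeta_eq : zeta d f z ε e = sSup (ZS d f z ε e) := rfl

lemma zero_mem (hε : 0 < ε) : (0:ℝ) ∈ ZS d f z ε e := by
  refine ⟨z, z, ε, ε, ⟨by linarith, le_refl _⟩, ⟨by linarith, le_refl _⟩, hε.ne', hε.ne',
    left_mem_segment ℝ z _, left_mem_segment ℝ z _, by simp⟩

lemma quot_bound (hK : LipschitzWith K f) (he : ‖e‖ = 1) {t : ℝ} (ht : t ≠ 0)
    (x : EuclideanSpace ℝ (Fin d)) : |(f (x + t • e) - f x) / t| ≤ (K:ℝ) := by
  rw [abs_div, div_le_iff₀ (abs_pos.2 ht)]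
  have h1 := hK.dist_le_mul (x + t • e) x
  rw [Real.dist_eq, dist_eq_norm, add_sub_cancel_left, norm_smul, he] at h1
  simpa using h1

lemma mem_le (hK : LipschitzWith K f) (he : ‖e‖ = 1) {r : ℝ} (hr : r ∈ ZS d f z ε e) :
    r ≤ 2 * K := by
  obtain ⟨x, y, s, t, _, _, hs0, ht0, _, _, rfl⟩ := hr
  have h1 := quot_bound hK he ht0 x
  have h2 := quot_bound hK he hs0 y
  calc |(f (x + t • e) - f x) / t - (f (y + s • e) - f y) / s|
      ≤ |(f (x + t • e) - f x) / t| + |(f (y + s • e) - f y) / s| := abs_sub _ _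
    _ ≤ 2 * K := by linarith

lemma zs_bddAbove (hK : LipschitzWith K f) (he : ‖e‖ = 1) : BddAbove (ZS d f z ε e) :=
  ⟨2 * K, fun _ hr => mem_le hK he hr⟩

lemma zeta_nonneg (hK : LipschitzWith K f) (he : ‖e‖ = 1) (hε : 0 < ε) :
    0 ≤ zeta d f z ε e :=
  le_csSup (zs_bddAbove hK he) (zero_mem hε)

lemma zeta_le_2K (hK : LipschitzWith K f) (he : ‖e‖ = 1) (hε : 0 < ε) :
    zeta d f z ε e ≤ 2 * K :=
  csSup_le ⟨0, zero_mem hε⟩ fun _ hr => mem_le hK he hr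

lemma zeta_mono (hK : LipschitzWith K f) (he : ‖e‖ = 1) (hε : 0 < ε) (hεε' : ε ≤ ε') :
    zeta d f z ε e ≤ zeta d f z ε' e := by
  refine csSup_le_csSup (zs_bddAbove hK he) ⟨0, zero_mem hε⟩ ?_
  rintro r ⟨x, y, s, t, hs, ht, hs0, ht0, hzx, hzy, rfl⟩
  exact ⟨x, y, s, t, ⟨by linarith [hs.1], by linarith [hs.2]⟩,
    ⟨by linarith [ht.1], by linarith [ht.2]⟩, hs0, ht0, hzx, hzy, rfl⟩

lemma shift (hK : LipschitzWith K f) {t : ℝ} (ht : t ≠ 0) {x : EuclideanSpace ℝ (Fin d)}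
    (hz : z ∈ segment ℝ x (x + t • e)) (e' : EuclideanSpace ℝ (Fin d)) :
    ∃ x', z ∈ segment ℝ x' (x' + t • e') ∧
      |(f (x + t • e) - f x) / t - (f (x' + t • e') - f x') / t| ≤ K * ‖e - e'‖ := by
  obtain ⟨a, b, ha, hb, hab, hz⟩ := hz
  have hx : x = z - (b * t) • e := by
    rw [← hz]; have h1 : a = 1 - b := by linarith
    subst h1; module
  refine ⟨z - (b * t) • e', ⟨a, b, ha, hb, hab, ?_⟩, ?_⟩
  · have h1 : a = 1 - b := by linarith
    subst h1; module
  · have hxe : x + t • e = z + ((a * t) • e) := by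
      rw [hx]; have h1 : a = 1 - b := by linarith
      subst h1; module
    have hx'e : (z - (b * t) • e') + t • e' = z + ((a * t) • e') := by
      have h1 : a = 1 - b := by linarith
      subst h1; module
    have d1 : dist (f (x + t • e)) (f ((z - (b * t) • e') + t • e')) ≤
        K * (a * |t| * ‖e - e'‖) := by
      refine (hK.dist_le_mul _ _).trans ?_
      rw [hxe, hx'e]
      have h2 : dist (z + (a * t) • e) (z + (a * t) • e') = ‖(a * t) • (e - e')‖ := by
        rw [dist_eq_norm]; congr 1; module
      rw [h2, norm_smul, Real.norm_eq_abs, abs_mul, abs_of_nonneg ha, mul_assoc]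
    have d2 : dist (f x) (f (z - (b * t) • e')) ≤ K * (b * |t| * ‖e - e'‖) := by
      refine (hK.dist_le_mul _ _).trans ?_
      rw [hx]
      have h2 : dist (z - (b * t) • e) (z - (b * t) • e') = ‖(b * t) • (e' - e)‖ := by
        rw [dist_eq_norm]; congr 1; module
      rw [h2, norm_smul, Real.norm_eq_abs, abs_mul, abs_of_nonneg hb, norm_sub_rev, mul_assoc]
    rw [div_sub_div_same, abs_div]
    rw [div_le_iff₀ (abs_pos.2 ht)]
    rw [Real.dist_eq] at d1 d2
    have key : |f (x + t • e) - f x - (f ((z - (b * t) • e') + t • e') - f (z - (b * t) • e'))|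
        ≤ |f (x + t • e) - f ((z - (b * t) • e') + t • e')| + |f x - f (z - (b * t) • e')| := by
      have := abs_sub (f (x + t • e) - f ((z - (b * t) • e') + t • e'))
        (f x - f (z - (b * t) • e'))
      calc _ = |(f (x + t • e) - f ((z - (b * t) • e') + t • e')) -
          (f x - f (z - (b * t) • e'))| := by ring_nf
        _ ≤ _ := abs_sub _ _
    refine key.trans ?_
    have habs : (K:ℝ) * (a * |t| * ‖e - e'‖) + K * (b * |t| * ‖e - e'‖)
        = K * ‖e - e'‖ * |t| := by
      linear_combination (↑K * |t| * ‖e - e'‖ : ℝ) * hab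
    linarith [d1, d2]

lemma zeta_lip (hK : LipschitzWith K f) (he : ‖e‖ = 1) (he' : ‖e'‖ = 1) (hε : 0 < ε) :
    zeta d f z ε e ≤ zeta d f z ε e' + 2 * K * ‖e - e'‖ := by
  refine csSup_le ⟨0, zero_mem hε⟩ ?_
  rintro r ⟨x, y, s, t, hs, ht, hs0, ht0, hzx, hzy, rfl⟩
  obtain ⟨x', hx'z, hx'⟩ := shift hK ht0 hzx e'
  obtain ⟨y', hy'z, hy'⟩ := shift hK hs0 hzy e'
  have hmem : |(f (x' + t • e') - f x') / t - (f (y' + s • e') - f y') / s| ∈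
      ZS d f z ε e' := ⟨x', y', s, t, hs, ht, hs0, ht0, hx'z, hy'z, rfl⟩
  have h1 := le_csSup (zs_bddAbove hK he') hmem
  set Qt := (f (x + t • e) - f x) / t
  set Qs := (f (y + s • e) - f y) / s
  set Qt' := (f (x' + t • e') - f x') / t
  set Qs' := (f (y' + s • e') - f y') / s
  calc |Qt - Qs| = |(Qt' - Qs') + ((Qt - Qt') - (Qs - Qs'))| := by ring_nf
    _ ≤ |Qt' - Qs'| + |(Qt - Qt') - (Qs - Qs')| := abs_add_le _ _
    _ ≤ |Qt' - Qs'| + (|Qt - Qt'| + |Qs - Qs'|) := by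
        linarith [abs_sub (Qt - Qt') (Qs - Qs')]
    _ ≤ zeta d f z ε e' + 2 * K * ‖e - e'‖ := by
        rw [zeta_eq]; linarith [hx', hy']


lemma us_bddAbove (hK : LipschitzWith K f) (hε : 0 < ε) :
    BddAbove {r : ℝ | ∃ e ∈ sphere (0 : EuclideanSpace ℝ (Fin d)) 1, r = zeta d f z ε e} := by
  refine ⟨2 * K, ?_⟩
  rintro r ⟨e, he, rfl⟩
  exact zeta_le_2K hK (mem_sphere_zero_iff_norm.1 he) hε

lemma Upsilon_mono (hK : LipschitzWith K f) {e0 : EuclideanSpace ℝ (Fin d)}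
    (he0 : e0 ∈ sphere (0 : EuclideanSpace ℝ (Fin d)) 1) (hε : 0 < ε) (hεε' : ε ≤ ε') :
    Upsilon d f z ε ≤ Upsilon d f z ε' := by
  refine csSup_le ⟨_, e0, he0, rfl⟩ ?_
  rintro r ⟨e, he, rfl⟩
  exact (zeta_mono hK (mem_sphere_zero_iff_norm.1 he) hε hεε').trans
    (le_csSup (us_bddAbove hK (hε.trans_le hεε')) ⟨e, he, rfl⟩)

lemma zeta_le_Upsilon (hK : LipschitzWith K f) (hε : 0 < ε)
    (he : e ∈ sphere (0 : EuclideanSpace ℝ (Fin d)) 1) :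
    zeta d f z ε e ≤ Upsilon d f z ε :=
  le_csSup (us_bddAbove hK hε) ⟨e, he, rfl⟩

end Stmt3Aux

open Stmt3Aux

/-- If `f : ℝ^d → ℝ` is Lipschitz and `limsup_{ε→0} Υ(f,z,ε) > 0`, then
there exists a unit vector `u` with `limsup_{ε→0} ζ(f,z,ε,u) > 0`. -/
theorem stmt3 (d : ℕ) (f : EuclideanSpace ℝ (Fin d) → ℝ)
    (hf : ∃ K, LipschitzWith K f) (z : EuclideanSpace ℝ (Fin d))
    (h : 0 < Filter.limsup (fun ε => Upsilon d f z ε) (𝓝[>] (0:ℝ))) :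
    ∃ u ∈ sphere (0 : EuclideanSpace ℝ (Fin d)) 1,
      0 < Filter.limsup (fun ε => zeta d f z ε u) (𝓝[>] (0:ℝ)) := by
  obtain ⟨K, hK⟩ := hf
  rcases Nat.eq_zero_or_pos d with hd | hd
  · exfalso
    subst hd
    have hU : ∀ ε : ℝ, Upsilon 0 f z ε = 0 := by
      intro ε
      have hempty : {r : ℝ | ∃ e ∈ sphere (0 : EuclideanSpace ℝ (Fin 0)) 1,
          r = zeta 0 f z ε e} = ∅ := by
        ext r
        simp only [Set.mem_setOf_eq, Set.mem_empty_iff_false, iff_false]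
        rintro ⟨e, he, -⟩
        have he0 : e = 0 := Subsingleton.elim e 0
        rw [he0] at he
        simp at he
      rw [Upsilon, hempty, Real.sSup_empty]
    simp only [hU, Filter.limsup_const] at h
    exact lt_irrefl 0 h
  · set e0 : EuclideanSpace ℝ (Fin d) := EuclideanSpace.single ⟨0, hd⟩ 1 with he0def
    have he0 : e0 ∈ sphere (0 : EuclideanSpace ℝ (Fin d)) 1 := by
      rw [mem_sphere_zero_iff_norm, he0def, EuclideanSpace.norm_single]
      simp
    set c := Filter.limsup (fun ε => Upsilon d f z ε) (𝓝[>] (0:ℝ)) with hcdef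
    have hc : ∀ ε : ℝ, 0 < ε → c ≤ Upsilon d f z ε := by
      intro ε hε
      refine Filter.limsup_le_of_le ?_ ?_
      · refine Filter.isCoboundedUnder_le_of_eventually_le _ (x := 0) ?_
        filter_upwards [self_mem_nhdsWithin] with x hx
        exact le_trans (zeta_nonneg hK (mem_sphere_zero_iff_norm.1 he0) hx)
          (zeta_le_Upsilon hK hx he0)
      · filter_upwards [Ioo_mem_nhdsGT_of_mem ⟨le_refl (0:ℝ), hε⟩] with x hx
        exact Upsilon_mono hK he0 hx.1 hx.2.le
    have H : ∀ n : ℕ, ∃ en ∈ sphere (0 : EuclideanSpace ℝ (Fin d)) 1,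
        c / 2 < zeta d f z (1 / (n + 1)) en := by
      intro n
      have hεn : (0:ℝ) < 1 / (n + 1) := by positivity
      have h1 : c / 2 < Upsilon d f z (1 / (n + 1)) :=
        lt_of_lt_of_le (by linarith) (hc _ hεn)
      have h1' : c / 2 < sSup {r : ℝ | ∃ e ∈ sphere (0 : EuclideanSpace ℝ (Fin d)) 1,
          r = zeta d f z (1 / (n + 1)) e} := h1
      have hne : Set.Nonempty {r : ℝ | ∃ e ∈ sphere (0 : EuclideanSpace ℝ (Fin d)) 1,
          r = zeta d f z (1 / (n + 1)) e} := ⟨zeta d f z (1 / (n + 1)) e0, e0, he0, rfl⟩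
      obtain ⟨r, ⟨en, hen, rfl⟩, hr⟩ := exists_lt_of_lt_csSup hne h1'
      exact ⟨en, hen, hr⟩
    choose e he hce using H
    obtain ⟨u, hu, φ, hφ, hconv⟩ :=
      (isCompact_sphere (0 : EuclideanSpace ℝ (Fin d)) 1).tendsto_subseq he
    have hu' : ‖u‖ = 1 := mem_sphere_zero_iff_norm.1 hu
    have hnorm : Filter.Tendsto (fun n => ‖e (φ n) - u‖) atTop (𝓝 0) := by
      have := (hconv.sub (tendsto_const_nhds (x := u))).norm
      simpa using this
    have claim : ∀ ε : ℝ, 0 < ε → c / 2 ≤ zeta d f z ε u := by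
      intro ε hε
      have hsmall : ∀ᶠ n : ℕ in atTop, 1 / ((φ n : ℝ) + 1) ≤ ε := by
        have h0 : Filter.Tendsto (fun n : ℕ => 1 / ((n:ℝ) + 1)) atTop (𝓝 0) :=
          tendsto_one_div_add_atTop_nhds_zero_nat
        filter_upwards [h0.eventually_lt_const hε] with n hn
        refine le_trans ?_ hn.le
        have h1 : (n:ℝ) + 1 ≤ (φ n : ℝ) + 1 := by
          have h2 : n ≤ φ n := hφ.le_apply
          have h3 : (n:ℝ) ≤ (φ n : ℝ) := by exact_mod_cast h2
          linarith
        exact one_div_le_one_div_of_le (by positivity) h1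
      have hev : ∀ᶠ n in atTop, c / 2 - 2 * K * ‖e (φ n) - u‖ ≤ zeta d f z ε u := by
        filter_upwards [hsmall] with n hn
        have hεn : (0:ℝ) < 1 / ((φ n : ℝ) + 1) := by positivity
        have h1 : c / 2 ≤ zeta d f z (1 / (φ n + 1)) (e (φ n)) := (hce (φ n)).le
        have h2 := zeta_mono (z := z) hK (mem_sphere_zero_iff_norm.1 (he (φ n))) hεn hn
        have h3 := zeta_lip (z := z) hK (mem_sphere_zero_iff_norm.1 (he (φ n))) hu' hε
        linarith
      have hlim : Filter.Tendsto (fun n => c / 2 - 2 * K * ‖e (φ n) - u‖) atTop (𝓝 (c / 2)) := by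
        have := tendsto_const_nhds (x := c / 2) (f := atTop (α := ℕ)) |>.sub
          ((hnorm.const_mul (2 * (K:ℝ))))
        simpa using this
      exact le_of_tendsto hlim hev
    refine ⟨u, hu, ?_⟩
    have hb : Filter.IsBoundedUnder (· ≤ ·) (𝓝[>] (0:ℝ)) (fun ε => zeta d f z ε u) := by
      refine ⟨2 * K, Filter.eventually_map.2 ?_⟩
      filter_upwards [self_mem_nhdsWithin] with x hx
      exact zeta_le_2K hK hu' hx
    have hfreq : ∃ᶠ ε in 𝓝[>] (0:ℝ), c / 2 ≤ zeta d f z ε u := by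
      refine Filter.Eventually.frequently ?_
      filter_upwards [self_mem_nhdsWithin] with x hx
      exact claim x hx
    have := Filter.le_limsup_of_frequently_le hfreq hb
    have hc2 : 0 < c := h
    linarith


end
end

section
/- Let w ∈ S¹, η ∈ (0,1), lines L_k = x_k + ℝe_k in ℝ² with e_k ∈ C(w,η), and ρ_k > 0 with ∑_{k≥1} ρ_k < ∞; set E := ⋂_{n≥1} ⋃_{k≥n} B(L_k,ρ_k). Then for every C¹ curve γ : I → ℝ² satisfying γ'(t) ∉ Ĉ(w,η) for all t ∈ I, the set γ⁻¹(E) has Lebesgue measure zero. -/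
/-!
Fix an orientation of the plane, with area form `ω`. The tangents `γ'(t)` avoid `Ĉ(w,η)` while
the directions `e_k` lie in `C(w,η)`, so `γ'(t) ≠ ±e_k`; since both families range over compact
sets, `|ω(e_k, γ'(t))| ≥ c > 0` uniformly in `k` and `t`. The signed distance
`t ↦ ω(e_k, γ(t) - x_k)` from `γ(t)` to `L_k` therefore has derivative of modulus at least `c`, so
the parameters `t` with `γ(t) ∈ B(L_k, ρ_k)` form a set of diameter at most `2ρ_k/c`. These
lengths are summable, and the Borel–Cantelli lemma concludes.
-/

open MeasureTheory Filter Metric Set Topology RealInnerProductSpace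

noncomputable section

/-- The Euclidean plane. -/
abbrev E2 := EuclideanSpace ℝ (Fin 2)

/-- `IsC1Curve a b γ γ'` : `γ` restricted to the compact nondegenerate interval `[a,b]`
is a C¹ curve with (one-sided at endpoints) derivative `γ'`, continuous and of unit
norm on `[a,b]`. -/
def IsC1Curve (a b : ℝ) (γ γ' : ℝ → E2) : Prop :=
  a < b ∧ ContinuousOn γ' (Set.Icc a b) ∧
    (∀ t ∈ Set.Icc a b, HasDerivWithinAt γ (γ' t) (Set.Icc a b) t) ∧
    (∀ t ∈ Set.Icc a b, ‖γ' t‖ = 1)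

/-- The cone `C(w,α) = {v ∈ S¹ : ⟨v,w⟩ ≥ 1 − α}`. -/
def cone (w : E2) (α : ℝ) : Set E2 :=
  {v ∈ sphere (0:E2) 1 | 1 - α ≤ ⟪v, w⟫}

/-- The double-sided cone `Ĉ(w,α) = {v ∈ S¹ : |⟨v,w⟩| ≥ 1 − α}`. -/
def hatC (w : E2) (α : ℝ) : Set E2 :=
  {v ∈ sphere (0:E2) 1 | 1 - α ≤ |⟪v, w⟫|}

/-- The line `x + ℝe`. -/
def line (x e : E2) : Set E2 := {y | ∃ t : ℝ, y = x + t • e}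

open Module
open scoped EuclideanSpace

lemma mul_abs_sub_le_abs_sub_of_le_abs_deriv {f f' : ℝ → ℝ} {a b c : ℝ}
    (hf : ∀ t ∈ Icc a b, HasDerivWithinAt f (f' t) (Icc a b) t)
    (hc : ∀ t ∈ Icc a b, c ≤ |f' t|) {s t : ℝ} (hs : s ∈ Icc a b) (ht : t ∈ Icc a b) :
    c * |t - s| ≤ |f t - f s| := by
  wlog hst : s < t generalizing s t
  · rcases (not_lt.1 hst).eq_or_lt with rfl | hts
    · simp
    · simpa only [abs_sub_comm] using this ht hs hts
  have hsub : Icc s t ⊆ Icc a b := Icc_subset_Icc hs.1 ht.2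
  obtain ⟨ξ, hξ, hslope⟩ := exists_hasDerivAt_eq_slope f f' hst
    (fun u hu => (hf u (hsub hu)).continuousWithinAt.mono hsub)
    (fun u hu => (hf u (hsub (Ioo_subset_Icc_self hu))).hasDerivAt
      (Icc_mem_nhds (hs.1.trans_lt hu.1) (hu.2.trans_le ht.2)))
  have hmvt : f t - f s = f' ξ * (t - s) := by
    rw [hslope, div_mul_cancel₀ _ (sub_ne_zero.2 hst.ne')]
  rw [hmvt, abs_mul]
  exact mul_le_mul_of_nonneg_right (hc ξ (hsub (Ioo_subset_Icc_self hξ))) (abs_nonneg _)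

lemma volume_setOf_abs_lt_le_of_le_abs_deriv {f f' : ℝ → ℝ} {a b c : ℝ} (hc₀ : 0 < c)
    (hf : ∀ t ∈ Icc a b, HasDerivWithinAt f (f' t) (Icc a b) t)
    (hc : ∀ t ∈ Icc a b, c ≤ |f' t|) (ρ : ℝ) :
    volume {t ∈ Icc a b | |f t| < ρ} ≤ ENNReal.ofReal (2 * ρ / c) := by
  refine (Real.volume_le_diam _).trans (ediam_le fun s hs t ht => ?_)
  rw [edist_dist, Real.dist_eq]
  refine ENNReal.ofReal_le_ofReal ((le_div_iff₀ hc₀).2 ?_)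
  have hgrowth := mul_abs_sub_le_abs_sub_of_le_abs_deriv hf hc ht.1 hs.1
  linarith [abs_sub (f s) (f t), hs.2, ht.2]

namespace Orientation

variable {V : Type*} [NormedAddCommGroup V] [InnerProductSpace ℝ V] [Fact (finrank ℝ V = 2)]
  (o : Orientation ℝ V (Fin 2))

local notation "ω" => o.areaForm

lemma abs_inner_eq_of_areaForm_eq_zero {e u : V} (he : ‖e‖ = 1) (hu : ‖u‖ = 1) (h : ω e u = 0)
    (w : V) : |⟪u, w⟫| = |⟪e, w⟫| := by
  have hsq : ⟪e, u⟫ ^ 2 = 1 := by simpa [he, hu, h] using o.inner_sq_add_areaForm_sq e u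
  have hexp : ⟪e, u⟫ * ⟪e, w⟫ = ⟪u, w⟫ := by
    simpa [he, h] using o.inner_mul_inner_add_areaForm_mul_areaForm e u w
  rcases sq_eq_one_iff.1 hsq with h1 | h1 <;> simp [← hexp, h1]

lemma exists_pos_le_abs_areaForm {K D : Set V} (hK : IsCompact K) (hD : IsCompact D)
    (h : ∀ u ∈ K, ∀ e ∈ D, ω e u ≠ 0) : ∃ c > 0, ∀ u ∈ K, ∀ e ∈ D, c ≤ |ω e u| := by
  have hcont : Continuous fun p : V × V => |ω p.1 p.2| :=
    continuous_abs.comp o.areaForm'.continuous₂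
  obtain ⟨c, hc, hle⟩ := (hD.prod hK).exists_forall_le' hcont.continuousOn
    fun p hp => abs_pos.2 (h p.2 hp.2 p.1 hp.1)
  exact ⟨c, hc, fun u hu e he => hle (e, u) ⟨he, hu⟩⟩

lemma abs_areaForm_sub_lt_of_mem_thickening {x e y : V} {ρ : ℝ} (he : ‖e‖ = 1)
    (hy : y ∈ thickening ρ {z | ∃ t : ℝ, z = x + t • e}) : |ω e (y - x)| < ρ := by
  obtain ⟨_, ⟨t, rfl⟩, hyz⟩ := mem_thickening_iff.1 hy
  calc |ω e (y - x)| = |ω e (y - (x + t • e))| := by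
        simp [sub_add_eq_sub_sub, areaForm_apply_self]
    _ ≤ ‖e‖ * ‖y - (x + t • e)‖ := o.abs_areaForm_le _ _
    _ < ρ := by rwa [he, one_mul, ← dist_eq_norm]

lemma hasDerivWithinAt_areaForm_sub {γ : ℝ → V} {γ' : V} {s : Set ℝ} {t : ℝ}
    (h : HasDerivWithinAt γ γ' s t) (e x : V) :
    HasDerivWithinAt (fun t => ω e (γ t - x)) (ω e γ') s t :=
  (o.areaForm' e).hasFDerivAt.comp_hasDerivWithinAt t (h.sub_const x)

end Orientation

lemma isCompact_cone (w : E2) (α : ℝ) : IsCompact (cone w α) :=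
  (isCompact_sphere 0 1).of_isClosed_subset
    (isClosed_sphere.inter (isClosed_le continuous_const (continuous_id.inner continuous_const) :
      IsClosed {v : E2 | 1 - α ≤ ⟪v, w⟫}))
    (sep_subset _ _)

theorem stmt7_general (w : E2) (η : ℝ)
    (x e : ℕ → E2) (he : ∀ k, e k ∈ cone w η)
    (ρ : ℕ → ℝ) (hsum : Summable ρ)
    (E : Set E2)
    (hE : E = ⋂ n : ℕ, ⋃ k, ⋃ _ : n ≤ k, Metric.thickening (ρ k) (line (x k) (e k)))
    (a b : ℝ) (γ γ' : ℝ → E2) (hγ : IsC1Curve a b γ γ')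
    (hdir : ∀ t ∈ Set.Icc a b, γ' t ∉ hatC w η) :
    volume (γ ⁻¹' E ∩ Set.Icc a b) = 0 := by
  obtain ⟨-, hγ'cont, hderiv, hunit⟩ := hγ
  let o : Orientation ℝ E2 (Fin 2) := (EuclideanSpace.basisFun (Fin 2) ℝ).toBasis.orientation
  have htransverse : ∀ u ∈ γ' '' Icc a b, ∀ v ∈ cone w η, o.areaForm v u ≠ 0 := by
    rintro _ ⟨t, ht, rfl⟩ v ⟨hv, hvw⟩ h
    refine hdir t ht ⟨mem_sphere_zero_iff_norm.2 (hunit t ht), ?_⟩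
    rw [o.abs_inner_eq_of_areaForm_eq_zero (mem_sphere_zero_iff_norm.1 hv) (hunit t ht) h]
    exact hvw.trans (le_abs_self _)
  obtain ⟨c, hc, hcle⟩ := o.exists_pos_le_abs_areaForm
    (isCompact_Icc.image_of_continuousOn hγ'cont) (isCompact_cone w η) htransverse
  set A : ℕ → Set ℝ := fun k => {t ∈ Icc a b | |o.areaForm (e k) (γ t - x k)| < ρ k}
  have hA : ∀ k, volume (A k) ≤ ENNReal.ofReal (2 * ρ k / c) := fun k =>
    volume_setOf_abs_lt_le_of_le_abs_deriv hc
      (fun t ht => o.hasDerivWithinAt_areaForm_sub (hderiv t ht) (e k) (x k))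
      (fun t ht => hcle _ (mem_image_of_mem _ ht) _ (he k)) (ρ k)
  have hsub : γ ⁻¹' E ∩ Icc a b ⊆ limsup A atTop := by
    rintro t ⟨htE, ht⟩
    simp only [hE, mem_preimage, mem_iInter, mem_iUnion, exists_prop] at htE
    refine mem_limsup_iff_frequently_mem.2 (frequently_atTop.2 fun n => ?_)
    obtain ⟨k, hnk, hk⟩ := htE n
    exact ⟨k, hnk, ht,
      o.abs_areaForm_sub_lt_of_mem_thickening (mem_sphere_zero_iff_norm.1 (he k).1) hk⟩
  refine measure_mono_null hsub (measure_limsup_atTop_eq_zero ?_)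
  exact ne_top_of_le_ne_top ((hsum.mul_left 2).div_const c).tsum_ofReal_ne_top
    (ENNReal.tsum_le_tsum hA)

/-- Let `L_k = x_k + ℝ e_k` be lines with directions `e_k ∈ C(w,η)`,
`ρ_k > 0` summable, and `E = ⋂_n ⋃_{k≥n} B(L_k,ρ_k)`. Every C¹ curve whose tangents avoid
the double cone `Ĉ(w,η)` meets `E` in a set of Lebesgue measure zero. -/
theorem stmt7 (w : E2) (hw : w ∈ sphere (0:E2) 1) (η : ℝ) (hη : η ∈ Set.Ioo (0:ℝ) 1)
    (x e : ℕ → E2) (he : ∀ k, e k ∈ cone w η)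
    (ρ : ℕ → ℝ) (hρ : ∀ k, 0 < ρ k) (hsum : Summable ρ)
    (E : Set E2)
    (hE : E = ⋂ n : ℕ, ⋃ k, ⋃ _ : n ≤ k, Metric.thickening (ρ k) (line (x k) (e k)))
    (a b : ℝ) (γ γ' : ℝ → E2) (hγ : IsC1Curve a b γ γ')
    (hdir : ∀ t ∈ Set.Icc a b, γ' t ∉ hatC w η) :
    volume (γ ⁻¹' E ∩ Set.Icc a b) = 0 :=
  stmt7_general w η x e he ρ hsum E hE a b γ γ' hγ hdir

end
end

section
/- Let (L_k)_{k≥1} be lines in ℝ² and ρ_k > 0, and define k_p : ℝ² → ℕ ∪ {∞} by k_0 ≡ 0 and k_p(z) := inf{k ∈ ℕ : k > k_{p−1}(z), z ∈ B(L_k,ρ_k)}. For k ∈ ℕ define σ_k(z) := (−1)^p, where p is the unique nonnegative integer with k_{p−1}(z) ≤ k < k_p(z). Then for each k ∈ ℕ, the function σ_k is constant on each connected component of ℝ² ∖ ⋃_{j=1}^{k} ∂B(L_j,ρ_j). -/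
open MeasureTheory Filter Metric Set Topology RealInnerProductSpace

noncomputable section

/-- `kseq B p z` is `k_p(z)`: `k_0(z) = 0` and `k_p(z)` is the least index `k > k_{p−1}(z)`
with `z ∈ B k` (`∞` if there is none). -/
def kseq (B : ℕ → Set E2) : ℕ → E2 → ℕ∞
  | 0 => fun _ => 0
  | p + 1 => fun z =>
      sInf {m : ℕ∞ | ∃ k : ℕ, m = (k : ℕ∞) ∧ kseq B p z < (k : ℕ∞) ∧ z ∈ B k}

/-- `σ_k(z) = (−1)^p`, where `p` is the unique nonnegative integer with
`k_{p−1}(z) ≤ k < k_p(z)`; equivalently `p` is the least index with `k < k_p(z)`. -/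
def sgn (B : ℕ → Set E2) (k : ℕ) (z : E2) : ℤ :=
  (-1) ^ sInf {p : ℕ | (k : ℕ∞) < kseq B p z}

/-- If two sets of `ℕ∞` agree below `n`, their infima agree or are both `> n`. -/
lemma key_inf_aux (S T : Set ℕ∞) (n : ℕ) (h : ∀ m : ℕ∞, m ≤ n → (m ∈ S ↔ m ∈ T))
    (hS : sInf S ≤ n) : sInf S = sInf T := by
  have hSne : S.Nonempty := by
    by_contra hne
    rw [Set.not_nonempty_iff_eq_empty] at hne
    simp [hne] at hS
  have hmem : sInf S ∈ S := csInf_mem hSne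
  have hT : sInf S ∈ T := (h _ hS).1 hmem
  have h1 : sInf T ≤ sInf S := sInf_le hT
  have hmemT : sInf T ∈ T := csInf_mem ⟨_, hT⟩
  have h2 : sInf T ∈ S := (h _ (le_trans h1 hS)).2 hmemT
  exact le_antisymm (sInf_le h2) h1

lemma key_inf (S T : Set ℕ∞) (n : ℕ) (h : ∀ m : ℕ∞, m ≤ n → (m ∈ S ↔ m ∈ T)) :
    sInf S = sInf T ∨ ((n : ℕ∞) < sInf S ∧ (n : ℕ∞) < sInf T) := by
  rcases le_or_gt (sInf S) n with hS | hS
  · exact Or.inl (key_inf_aux S T n h hS)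
  · rcases le_or_gt (sInf T) n with hT | hT
    · exact Or.inl (key_inf_aux T S n (fun m hm => (h m hm).symm) hT).symm
    · exact Or.inr ⟨hS, hT⟩

lemma kseq_eq_or_gt (B : ℕ → Set E2) (k : ℕ) (z z' : E2)
    (h : ∀ j : ℕ, 1 ≤ j → j ≤ k → (z ∈ B j ↔ z' ∈ B j)) (p : ℕ) :
    kseq B p z = kseq B p z' ∨ ((k : ℕ∞) < kseq B p z ∧ (k : ℕ∞) < kseq B p z') := by
  induction p with
  | zero => exact Or.inl rfl
  | succ p ih =>
    rcases ih with heq | ⟨h1, h2⟩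
    · show sInf _ = sInf _ ∨ _
      apply key_inf
      rintro m hm
      constructor
      · rintro ⟨j, rfl, hlt, hmem⟩
        have hj1 : 1 ≤ j := by
          rcases Nat.eq_zero_or_pos j with rfl | hj
          · exact absurd hlt (by simp)
          · exact hj
        have hjk : j ≤ k := by exact_mod_cast hm
        exact ⟨j, rfl, heq ▸ hlt, (h j hj1 hjk).1 hmem⟩
      · rintro ⟨j, rfl, hlt, hmem⟩
        have hj1 : 1 ≤ j := by
          rcases Nat.eq_zero_or_pos j with rfl | hj
          · exact absurd hlt (by simp)
          · exact hj
        have hjk : j ≤ k := by exact_mod_cast hm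
        exact ⟨j, rfl, heq ▸ hlt, (h j hj1 hjk).2 hmem⟩
    · right
      have key : ∀ (w : E2), (k : ℕ∞) < kseq B p w →
          (k : ℕ∞) < kseq B (p + 1) w := by
        intro w hw
        refine lt_of_lt_of_le hw (le_sInf ?_)
        rintro m ⟨j, rfl, hlt, _⟩
        exact le_of_lt hlt
      exact ⟨key z h1, key z' h2⟩

lemma sgn_eq (B : ℕ → Set E2) (k : ℕ) (z z' : E2)
    (h : ∀ j : ℕ, 1 ≤ j → j ≤ k → (z ∈ B j ↔ z' ∈ B j)) :
    sgn B k z = sgn B k z' := by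
  unfold sgn
  congr 1
  congr 1
  ext p
  rcases kseq_eq_or_gt B k z z' h p with heq | ⟨h1, h2⟩
  · simp only [Set.mem_setOf_eq, heq]
  · simp only [Set.mem_setOf_eq]
    exact ⟨fun _ => h2, fun _ => h1⟩

/-- For lines `L_k` with widths `ρ_k > 0`, the function `σ_k` is constant
on each connected component of `ℝ² ∖ ⋃_{j=1}^{k} ∂B(L_j,ρ_j)`. -/
theorem stmt11 (x e : ℕ → E2) (he : ∀ k, ‖e k‖ = 1) (ρ : ℕ → ℝ) (hρ : ∀ k, 0 < ρ k)
    (B : ℕ → Set E2) (hB : ∀ k, B k = Metric.thickening (ρ k) (line (x k) (e k)))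
    (k : ℕ) (P : Set E2)
    (hP : ∃ z₀ ∈ (Set.univ : Set E2) \ ⋃ j ∈ Set.Icc 1 k, frontier (B j),
      P = connectedComponentIn ((Set.univ : Set E2) \ ⋃ j ∈ Set.Icc 1 k, frontier (B j)) z₀) :
    ∀ z ∈ P, ∀ z' ∈ P, sgn B k z = sgn B k z' := by
  obtain ⟨z₀, hz₀, rfl⟩ := hP
  set U := (Set.univ : Set E2) \ ⋃ j ∈ Set.Icc 1 k, frontier (B j) with hU
  intro z hz z' hz'
  have hPU : connectedComponentIn U z₀ ⊆ U := connectedComponentIn_subset _ _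
  have hconn : IsPreconnected (connectedComponentIn U z₀) :=
    (isConnected_connectedComponentIn_iff.mpr hz₀).isPreconnected
  apply sgn_eq
  intro j h1 h2
  have hBopen : IsOpen (B j) := by rw [hB]; exact isOpen_thickening
  have hdisj : ∀ w ∈ connectedComponentIn U z₀, w ∉ frontier (B j) := by
    intro w hw hf
    have hwU := hPU hw
    rw [hU] at hwU
    exact hwU.2 (Set.mem_biUnion ⟨h1, h2⟩ hf)
  have hsub : connectedComponentIn U z₀ ⊆ B j ∪ (closure (B j))ᶜ := by
    intro w hw
    by_cases hc : w ∈ closure (B j)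
    · left
      have : w ∈ interior (B j) := by
        by_contra hi
        exact hdisj w hw ⟨hc, hi⟩
      rwa [hBopen.interior_eq] at this
    · exact Or.inr hc
  have hd : Disjoint (B j) (closure (B j))ᶜ :=
    Set.disjoint_left.mpr fun w hwB hwC => hwC (subset_closure hwB)
  rcases hconn.subset_or_subset hBopen isClosed_closure.isOpen_compl hd hsub with hs | hs
  · exact ⟨fun _ => hs hz', fun _ => hs hz⟩
  · exact ⟨fun hzB => absurd (subset_closure hzB) (hs hz),
      fun hzB => absurd (subset_closure hzB) (hs hz')⟩
end
end

section
/- Let (S_k)_{k≥1} be finite subsets of ℝ² and δ_k > 0 with ∑_{k≥1} |S_k| δ_k < ∞, and set G := ⋂_{n≥1} ⋃_{k≥n} B(S_k,δ_k). Let v ∈ S¹, θ ∈ (0,1), and let γ : I → ℝ² be a C¹ curve with γ'(t) ∈ C(v,θ) for all t ∈ I. Then γ⁻¹(G) has Lebesgue measure zero. -/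
/-!
Along the curve, `t ↦ ⟪γ t, v⟫ - (1 - θ) t` is nondecreasing, so `γ` expands distances by at
least the factor `1 - θ` and the preimage of a ball of radius `r` has diameter at most
`2r / (1 - θ)`. Hence `γ⁻¹(B(S_k, δ_k))` has measure `O(|S_k| δ_k)`, and Borel–Cantelli
applies to the limsup `γ⁻¹(G)`.
-/

open MeasureTheory Filter Metric Set Topology RealInnerProductSpace

noncomputable section

section
variable {E : Type*} [NormedAddCommGroup E] [InnerProductSpace ℝ E]

theorem mul_sub_le_inner_sub_of_le_inner_deriv {f f' : ℝ → E} {a b c : ℝ} {v : E}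
    (hf : ∀ t ∈ Icc a b, HasDerivWithinAt f (f' t) (Icc a b) t)
    (hc : ∀ t ∈ Icc a b, c ≤ ⟪f' t, v⟫) :
    ∀ s ∈ Icc a b, ∀ t ∈ Icc a b, s ≤ t → c * (t - s) ≤ ⟪f t - f s, v⟫ := by
  have hderiv : ∀ t ∈ Ioo a b, HasDerivAt (fun t => ⟪f t, v⟫) ⟪f' t, v⟫ t := fun t ht => by
    simpa using ((hf t (Ioo_subset_Icc_self ht)).hasDerivAt (Icc_mem_nhds ht.1 ht.2)).inner ℝ
      (hasDerivAt_const t v)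
  intro s hs t ht hst
  rw [inner_sub_left]
  refine (convex_Icc a b).mul_sub_le_image_sub_of_le_deriv
    (fun t ht => ((hf t ht).inner ℝ (hasDerivWithinAt_const t _ v)).continuousWithinAt)
    (fun t ht => (hderiv t (by rwa [interior_Icc] at ht)).differentiableAt.differentiableWithinAt)
    (fun t ht => ?_) s hs t ht hst
  rw [interior_Icc] at ht
  rw [(hderiv t ht).deriv]
  exact hc t (Ioo_subset_Icc_self ht)

theorem mul_dist_le_dist_of_le_inner_deriv {f f' : ℝ → E} {a b c : ℝ} {v : E} (hv : ‖v‖ ≤ 1)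
    (hf : ∀ t ∈ Icc a b, HasDerivWithinAt f (f' t) (Icc a b) t)
    (hc : ∀ t ∈ Icc a b, c ≤ ⟪f' t, v⟫) :
    ∀ s ∈ Icc a b, ∀ t ∈ Icc a b, c * dist s t ≤ dist (f s) (f t) := by
  have hmono := mul_sub_le_inner_sub_of_le_inner_deriv hf hc
  have inner_le : ∀ x : E, ⟪x, v⟫ ≤ ‖x‖ := fun x =>
    (real_inner_le_norm x v).trans (mul_le_of_le_one_right (norm_nonneg x) hv)
  intro s hs t ht
  rcases le_total s t with hst | hts
  · calc c * dist s t = c * (t - s) := by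
          rw [Real.dist_eq, abs_sub_comm, abs_of_nonneg (sub_nonneg.2 hst)]
      _ ≤ ⟪f t - f s, v⟫ := hmono s hs t ht hst
      _ ≤ dist (f s) (f t) := by rw [dist_comm, dist_eq_norm]; exact inner_le _
  · calc c * dist s t = c * (s - t) := by rw [Real.dist_eq, abs_of_nonneg (sub_nonneg.2 hts)]
      _ ≤ ⟪f s - f t, v⟫ := hmono t ht s hs hts
      _ ≤ dist (f s) (f t) := by rw [dist_eq_norm]; exact inner_le _

end

section
variable {X : Type*} [PseudoMetricSpace X] {f : ℝ → X} {T : Set ℝ} {c : ℝ}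

theorem volume_preimage_ball_inter_le (hc : 0 < c)
    (hf : ∀ s ∈ T, ∀ t ∈ T, c * dist s t ≤ dist (f s) (f t)) (x : X) (r : ℝ) :
    volume (f ⁻¹' ball x r ∩ T) ≤ ENNReal.ofReal (2 * r / c) := by
  refine (Real.volume_le_diam _).trans (ediam_le_of_forall_dist_le fun s hs t ht => ?_)
  rw [le_div_iff₀' hc]
  calc c * dist s t ≤ dist (f s) (f t) := hf s hs.2 t ht.2
    _ ≤ dist (f s) x + dist (f t) x := dist_triangle_right _ _ _
    _ ≤ 2 * r := by linarith [mem_ball.1 hs.1, mem_ball.1 ht.1]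

theorem volume_preimage_thickening_inter_le (hc : 0 < c)
    (hf : ∀ s ∈ T, ∀ t ∈ T, c * dist s t ≤ dist (f s) (f t)) {S : Set X} (hS : S.Finite)
    (δ : ℝ) :
    volume (f ⁻¹' thickening δ S ∩ T) ≤ ENNReal.ofReal (2 / c * (S.ncard * δ)) := by
  calc volume (f ⁻¹' thickening δ S ∩ T)
      = volume (⋃ x ∈ hS.toFinset, f ⁻¹' ball x δ ∩ T) := by
        simp only [thickening_eq_biUnion_ball, preimage_iUnion, iUnion_inter, Finite.mem_toFinset]
    _ ≤ ∑ x ∈ hS.toFinset, volume (f ⁻¹' ball x δ ∩ T) := measure_biUnion_finset_le _ _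
    _ ≤ ∑ _x ∈ hS.toFinset, ENNReal.ofReal (2 * δ / c) :=
        Finset.sum_le_sum fun x _ => volume_preimage_ball_inter_le hc hf x δ
    _ = ENNReal.ofReal (2 / c * (S.ncard * δ)) := by
        rw [Finset.sum_const, nsmul_eq_mul, ← ncard_eq_toFinset_card S hS,
          ← ENNReal.ofReal_natCast, ← ENNReal.ofReal_mul (Nat.cast_nonneg _)]
        congr 1
        ring

theorem volume_preimage_limsup_thickening_inter_eq_zero (hc : 0 < c)
    (hf : ∀ s ∈ T, ∀ t ∈ T, c * dist s t ≤ dist (f s) (f t)) {S : ℕ → Set X}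
    (hS : ∀ k, (S k).Finite) {δ : ℕ → ℝ} (hsum : Summable fun k => (S k).ncard * δ k) :
    volume (f ⁻¹' limsup (fun k => thickening (δ k) (S k)) atTop ∩ T) = 0 := by
  refine measure_mono_null (t := limsup (fun k => f ⁻¹' thickening (δ k) (S k) ∩ T) atTop)
    (fun t ht => ?_) (measure_limsup_atTop_eq_zero ?_)
  · simp only [mem_inter_iff, mem_preimage, mem_limsup_iff_frequently_mem] at ht ⊢
    exact ht.1.mono fun k hk => ⟨hk, ht.2⟩
  · exact ne_top_of_le_ne_top (hsum.mul_left (2 / c)).tsum_ofReal_ne_top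
      (ENNReal.tsum_le_tsum fun k => volume_preimage_thickening_inter_le hc hf (hS k) (δ k))

end

theorem stmt12_general (S : ℕ → Set E2) (hS : ∀ k, (S k).Finite)
    (δ : ℕ → ℝ)
    (hsum : Summable fun k => ((S k).ncard : ℝ) * δ k)
    (G : Set E2)
    (hG : G = ⋂ n : ℕ, ⋃ k, ⋃ _ : n ≤ k, Metric.thickening (δ k) (S k))
    (v : E2) (hv : v ∈ sphere (0:E2) 1) (θ : ℝ) (hθ : θ ∈ Set.Ioo (0:ℝ) 1)
    (a b : ℝ) (γ γ' : ℝ → E2) (hγ : IsC1Curve a b γ γ')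
    (hdir : ∀ t ∈ Set.Icc a b, γ' t ∈ cone v θ) :
    volume (γ ⁻¹' G ∩ Set.Icc a b) = 0 := by
  have hG_limsup : G = limsup (fun k => thickening (δ k) (S k)) atTop :=
    hG.trans limsup_eq_iInf_iSup_of_nat.symm
  obtain ⟨-, -, hγ_deriv, -⟩ := hγ
  have hγ_expanding : ∀ s ∈ Icc a b, ∀ t ∈ Icc a b, (1 - θ) * dist s t ≤ dist (γ s) (γ t) :=
    mul_dist_le_dist_of_le_inner_deriv (mem_sphere_zero_iff_norm.1 hv).le hγ_deriv
      fun t ht => (hdir t ht).2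
  rw [hG_limsup]
  exact volume_preimage_limsup_thickening_inter_eq_zero (sub_pos.2 hθ.2) hγ_expanding hS hsum

/-- Let `S_k ⊆ ℝ²` be finite, `δ_k > 0` with `∑ |S_k| δ_k < ∞`, and
`G = ⋂_n ⋃_{k≥n} B(S_k,δ_k)`. Every C¹ curve whose tangents lie in a cone `C(v,θ)`,
`θ ∈ (0,1)`, meets `G` in a set of Lebesgue measure zero. -/
theorem stmt12 (S : ℕ → Set E2) (hS : ∀ k, (S k).Finite)
    (δ : ℕ → ℝ) (hδ : ∀ k, 0 < δ k)
    (hsum : Summable fun k => ((S k).ncard : ℝ) * δ k)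
    (G : Set E2)
    (hG : G = ⋂ n : ℕ, ⋃ k, ⋃ _ : n ≤ k, Metric.thickening (δ k) (S k))
    (v : E2) (hv : v ∈ sphere (0:E2) 1) (θ : ℝ) (hθ : θ ∈ Set.Ioo (0:ℝ) 1)
    (a b : ℝ) (γ γ' : ℝ → E2) (hγ : IsC1Curve a b γ γ')
    (hdir : ∀ t ∈ Set.Icc a b, γ' t ∈ cone v θ) :
    volume (γ ⁻¹' G ∩ Set.Icc a b) = 0 :=
  stmt12_general S hS δ hsum G hG v hv θ hθ a b γ γ' hγ hdir

end
end

section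
/- Let (S_k)_{k≥1} be finite subsets of ℝ² and δ_k > 0 with ∑_{k≥1} |S_k| δ_k < ∞. Then the set G := ⋂_{n≥1} ⋃_{k≥n} B(S_k,δ_k) is purely unrectifiable: for every C¹ curve γ : I → ℝ², the set γ⁻¹(G) has Lebesgue measure zero. -/
open MeasureTheory Filter Metric Set Topology RealInnerProductSpace

noncomputable section

/-!
Near a parameter `t`, continuity of `γ'` keeps `γ'` within `1/2` of the unit vector `γ' t`, so
`s ↦ γ s - s • γ' t` is `1/2`-Lipschitz and `γ` is `2`-antilipschitz there. The preimage of a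
`δ`-ball near `t` therefore has length at most `4δ`, that of `B(S_k, δ_k)` measure at most
`4 |S_k| δ_k`, and Borel–Cantelli makes the limsup `γ⁻¹(G)` null near `t`; countably many such
neighbourhoods cover `[a, b]`.
-/

open scoped ENNReal NNReal

theorem Convex.mul_dist_le_dist_of_norm_deriv_sub_le {F : Type*} [NormedAddCommGroup F]
    [NormedSpace ℝ F] {J : Set ℝ} (hJ : Convex ℝ J) {γ γ' : ℝ → F} {v : F} {c : ℝ}
    (hγ : ∀ s ∈ J, HasDerivWithinAt γ (γ' s) J s) (hγ' : ∀ s ∈ J, ‖γ' s - v‖ ≤ c)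
    {s s' : ℝ} (hs : s ∈ J) (hs' : s' ∈ J) :
    (‖v‖ - c) * dist s s' ≤ dist (γ s) (γ s') := by
  have hderiv : ∀ r ∈ J, HasDerivWithinAt (fun r => γ r - r • v) (γ' r - v) J r := fun r hr => by
    simpa using (hγ r hr).fun_sub ((hasDerivWithinAt_id r J).smul_const v)
  have hdrift := hJ.norm_image_sub_le_of_norm_hasDerivWithin_le hderiv hγ' hs' hs
  have hsplit : (s - s') • v = (γ s - γ s') - ((γ s - s • v) - (γ s' - s' • v)) := by
    simp only [sub_smul]; abel
  calc (‖v‖ - c) * dist s s' = ‖(s - s') • v‖ - c * ‖s - s'‖ := by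
        rw [norm_smul, Real.dist_eq, Real.norm_eq_abs]; ring
    _ ≤ dist (γ s) (γ s') := by
        rw [hsplit, dist_eq_norm]
        linarith [norm_sub_le (γ s - γ s') ((γ s - s • v) - (γ s' - s' • v))]

theorem IsC1Curve.exists_mem_nhdsWithin_antilipschitzWith {a b : ℝ} {γ γ' : ℝ → E2}
    (hγ : IsC1Curve a b γ γ') {t : ℝ} (ht : t ∈ Icc a b) :
    ∃ J ∈ 𝓝[Icc a b] t, AntilipschitzWith 2 (J.domRestrict γ) := by
  obtain ⟨-, hγ'c, hd, hn⟩ := hγ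
  obtain ⟨ε, hε, hball⟩ := mem_nhdsWithin_iff.1 <|
    hγ'c t ht (ball_mem_nhds (γ' t) (by norm_num : (0 : ℝ) < 1 / 2))
  set J := ball t ε ∩ Icc a b
  have hJ : J ⊆ Icc a b := inter_subset_right
  refine ⟨J, inter_mem (mem_nhdsWithin_of_mem_nhds (ball_mem_nhds t hε)) self_mem_nhdsWithin,
    AntilipschitzWith.of_le_mul_dist fun s s' => ?_⟩
  have hdist := ((convex_ball t ε).inter (convex_Icc a b)).mul_dist_le_dist_of_norm_deriv_sub_le
    (fun r hr => (hd r (hJ hr)).mono hJ) (fun r hr => (mem_ball_iff_norm.1 (hball hr)).le)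
    s.2 s'.2
  rw [hn t ht] at hdist
  rw [Subtype.dist_eq, domRestrict_apply, domRestrict_apply]
  push_cast
  linarith

theorem AntilipschitzWith.volume_preimage_inter_le {α : Type*} [PseudoEMetricSpace α]
    {K : ℝ≥0} {f : ℝ → α} {J : Set ℝ} (hf : AntilipschitzWith K (J.domRestrict f)) (B : Set α) :
    volume (f ⁻¹' B ∩ J) ≤ K * ediam B :=
  calc volume (f ⁻¹' B ∩ J) ≤ ediam (f ⁻¹' B ∩ J) := Real.volume_le_diam _
    _ = ediam (J.domRestrict f ⁻¹' B) := by
      rw [← isometry_subtype_coe.ediam_image, domRestrict_eq, preimage_comp,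
        Subtype.image_preimage_coe, inter_comm]
    _ ≤ K * ediam B := hf.ediam_preimage_le B

theorem AntilipschitzWith.volume_preimage_thickening_inter_le {α : Type*}
    [PseudoMetricSpace α] {K : ℝ≥0} {f : ℝ → α} {J : Set ℝ}
    (hf : AntilipschitzWith K (J.domRestrict f)) {S : Set α} (hS : S.Finite) (r : ℝ) :
    volume (f ⁻¹' thickening r S ∩ J) ≤ ENNReal.ofReal (S.ncard * (2 * K * r)) := by
  have hball : ∀ x, volume (f ⁻¹' ball x r ∩ J) ≤ ENNReal.ofReal (2 * K * r) := fun x => by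
    grw [hf.volume_preimage_inter_le, ← eball_ofReal, ediam_eball_le]
    rw [ENNReal.ofReal_mul (by positivity), ENNReal.ofReal_mul zero_le_two,
      ENNReal.ofReal_ofNat, ENNReal.ofReal_coe_nnreal]
    exact le_of_eq (by ring)
  rw [thickening_eq_biUnion_ball, preimage_iUnion₂, iUnion₂_inter, ← hS.coe_toFinset,
    ENNReal.ofReal_mul (by positivity), ENNReal.ofReal_natCast, ncard_coe_finset,
    Finset.set_biUnion_coe]
  grw [measure_biUnion_finset_le, Finset.sum_le_sum fun x _ => hball x, Finset.sum_const,
    nsmul_eq_mul]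

theorem AntilipschitzWith.volume_preimage_limsup_thickening_inter_eq_zero {α : Type*}
    [PseudoMetricSpace α] {K : ℝ≥0} {f : ℝ → α} {J : Set ℝ}
    (hf : AntilipschitzWith K (J.domRestrict f)) {S : ℕ → Set α} (hS : ∀ k, (S k).Finite)
    {δ : ℕ → ℝ} (hsum : Summable fun k => ((S k).ncard : ℝ) * δ k) :
    volume (f ⁻¹' (⋂ n : ℕ, ⋃ k, ⋃ _ : n ≤ k, thickening (δ k) (S k)) ∩ J) = 0 := by
  have htsum : ∑' k, volume (f ⁻¹' thickening (δ k) (S k) ∩ J) ≠ ∞ := by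
    refine ne_top_of_le_ne_top (hsum.mul_right (2 * (K : ℝ))).tsum_ofReal_ne_top ?_
    exact ENNReal.tsum_le_tsum fun k =>
      (hf.volume_preimage_thickening_inter_le (hS k) (δ k)).trans_eq (by ring_nf)
  refine measure_mono_null ?_ (measure_limsup_atTop_eq_zero htsum)
  rintro s ⟨hs, hsJ⟩
  simp only [limsup_eq_iInf_iSup_of_nat, iInf_eq_iInter, iSup_eq_iUnion, mem_iInter, mem_iUnion,
    mem_inter_iff, mem_preimage] at hs ⊢
  intro n
  obtain ⟨k, hnk, hk⟩ := hs n
  exact ⟨k, hnk, hk, hsJ⟩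

theorem stmt14_general (S : ℕ → Set E2) (hS : ∀ k, (S k).Finite)
    (δ : ℕ → ℝ)
    (hsum : Summable fun k => ((S k).ncard : ℝ) * δ k)
    (G : Set E2)
    (hG : G = ⋂ n : ℕ, ⋃ k, ⋃ _ : n ≤ k, Metric.thickening (δ k) (S k))
    (a b : ℝ) (γ γ' : ℝ → E2) (hγ : IsC1Curve a b γ γ') :
    volume (γ ⁻¹' G ∩ Set.Icc a b) = 0 := by
  subst hG
  refine measure_null_of_locally_null _ fun t ht => ?_
  obtain ⟨J, hJt, hJ⟩ := hγ.exists_mem_nhdsWithin_antilipschitzWith ht.2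
  refine ⟨_ ∩ J, inter_mem self_mem_nhdsWithin (nhdsWithin_mono _ inter_subset_right hJt),
    measure_mono_null ?_ (hJ.volume_preimage_limsup_thickening_inter_eq_zero hS hsum)⟩
  exact inter_subset_inter_left _ inter_subset_left

/-- Let `S_k ⊆ ℝ²` be finite, `δ_k > 0` with `∑ |S_k| δ_k < ∞`. Then
`G = ⋂_n ⋃_{k≥n} B(S_k,δ_k)` is purely unrectifiable: every C¹ curve meets it in a set of
Lebesgue measure zero. -/
theorem stmt14 (S : ℕ → Set E2) (hS : ∀ k, (S k).Finite)
    (δ : ℕ → ℝ) (hδ : ∀ k, 0 < δ k)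
    (hsum : Summable fun k => ((S k).ncard : ℝ) * δ k)
    (G : Set E2)
    (hG : G = ⋂ n : ℕ, ⋃ k, ⋃ _ : n ≤ k, Metric.thickening (δ k) (S k))
    (a b : ℝ) (γ γ' : ℝ → E2) (hγ : IsC1Curve a b γ γ') :
    volume (γ ⁻¹' G ∩ Set.Icc a b) = 0 :=
  stmt14_general S hS δ hsum G hG a b γ γ' hγ

end
end
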